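/- arXiv:2206.02356 — 3 statements merged into one kernel-verified Lean document; each statement's English description precedes it below -/
import Mathlib

section
/- Bounding Lemma: let (Ω, F, P) be a probability space and (X_n)_{n≥1} a sequence of real random variables. Suppose ε, δ, p, C > 0 and r ≥ 0 are constants such that P(|X_n| ≥ ε n^δ) ≤ C · n^{r − pδ} · ε^{−p} for every n ≥ 1. Define the random variable T = T_bound((X_n), ε n^δ) as the smallest positive integer such that |X_m(ω)| ≤ ε m^δ for every integer m > T(ω), with T(ω) = +∞ if no such integer exists. Then: (i) if pδ > 1 + r, then T < ∞ almost surely; (ii) for every q ∈ (0, pδ − (1 + r)), the expectation E[T^q] is finite. -/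
open MeasureTheory
open scoped ENNReal

/-- `T_bound((X_n), g)`: the smallest positive integer `T` such that
`|X_m(ω)| ≤ g(m)` for every integer `m > T`, equal to `+∞` if no such
integer exists. -/
noncomputable def Tbound {Ω : Type*} (X : ℕ → Ω → ℝ) (g : ℕ → ℝ) (ω : Ω) : ℝ≥0∞ :=
  sInf {z : ℝ≥0∞ | ∃ T : ℕ, z = (T : ℝ≥0∞) ∧ 0 < T ∧
    ∀ m : ℕ, T < m → |X m ω| ≤ g m}

/-! If `T ≥ 2` is the first bounding time then `|X_T| > g T`, so `T ^ q` is dominated by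
`1 + ∑ₙ n ^ q 𝟙{|Xₙ| > g n}`, whose expectation is `1 + ∑ₙ n ^ q P(|Xₙ| > g n)`. With
`g n = ε n ^ δ` the tail bound makes this a series `∑ n ^ (q + r - pδ)`, finite when
`q < pδ - (1 + r)`. Almost sure finiteness follows because the dominating function is integrable
for some positive `q`. -/

section Tbound

variable {Ω : Type*} {X : ℕ → Ω → ℝ} {g : ℕ → ℝ} {q : ℝ} {ω : Ω}

theorem Tbound_le_of_forall_lt {T : ℕ} (hT : 0 < T) (h : ∀ m, T < m → |X m ω| ≤ g m) :
    Tbound X g ω ≤ T :=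
  sInf_le ⟨T, rfl, hT, h⟩

theorem lt_abs_of_minimal_bounding_time {T : ℕ}
    (h : ∀ m, T < m → |X m ω| ≤ g m) (hmin : ¬∀ m, T - 1 < m → |X m ω| ≤ g m) :
    g T < |X T ω| := by
  push Not at hmin
  obtain ⟨m, hm, hbad⟩ := hmin
  obtain rfl : m = T := by
    by_contra hne
    exact (h m (by omega)).not_gt hbad
  exact hbad

noncomputable def exceedanceWeight (X : ℕ → Ω → ℝ) (g : ℕ → ℝ) (q : ℝ) (ω : Ω) : ℝ≥0∞ :=
  ∑' n, {ω | g n < |X n ω|}.indicator (fun _ => (n : ℝ≥0∞) ^ q) ω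

theorem exists_bounding_time_of_exceedanceWeight_ne_top (hq : 0 < q)
    (hω : exceedanceWeight X g q ω ≠ ⊤) : ∃ T, 0 < T ∧ ∀ m, T < m → |X m ω| ≤ g m := by
  obtain ⟨N, hN⟩ := Filter.eventually_atTop.mp
    ((ENNReal.tendsto_atTop_zero_of_tsum_ne_top hω).eventually_lt_const one_pos)
  refine ⟨N + 1, N.succ_pos, fun m hm => ?_⟩
  by_contra! hbad
  have hm1 : (1 : ℝ≥0∞) ≤ m := Nat.one_le_cast.mpr (by omega)
  have hlt := hN m (by omega)
  rw [Set.indicator_of_mem (show ω ∈ {ω | g m < |X m ω|} from hbad)] at hlt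
  exact hlt.not_ge (ENNReal.one_le_rpow hm1 hq)

theorem Tbound_rpow_le_one_add_exceedanceWeight (hq : 0 < q) (ω : Ω) :
    Tbound X g ω ^ q ≤ 1 + exceedanceWeight X g q ω := by
  classical
  by_cases htop : exceedanceWeight X g q ω = ⊤
  · simp [htop]
  have hex := exists_bounding_time_of_exceedanceWeight_ne_top hq htop
  set T₀ := Nat.find hex
  obtain ⟨hpos, hgood⟩ : 0 < T₀ ∧ _ := Nat.find_spec hex
  have hle := ENNReal.rpow_le_rpow (Tbound_le_of_forall_lt hpos hgood) hq.le
  rcases (Nat.one_le_iff_ne_zero.mpr hpos.ne').eq_or_lt with h1 | h1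
  · rw [← h1, Nat.cast_one, ENNReal.one_rpow] at hle
    exact hle.trans le_self_add
  · have hbad : ω ∈ {ω | g T₀ < |X T₀ ω|} := lt_abs_of_minimal_bounding_time hgood
      fun h => Nat.find_min hex (Nat.sub_lt hpos one_pos) ⟨by omega, h⟩
    calc Tbound X g ω ^ q ≤ (T₀ : ℝ≥0∞) ^ q := hle
      _ = {ω | g T₀ < |X T₀ ω|}.indicator (fun _ => (T₀ : ℝ≥0∞) ^ q) ω :=
          (Set.indicator_of_mem hbad fun _ => (T₀ : ℝ≥0∞) ^ q).symm
      _ ≤ exceedanceWeight X g q ω := ENNReal.le_tsum T₀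
      _ ≤ 1 + exceedanceWeight X g q ω := le_add_self

variable [MeasurableSpace Ω] {μ : Measure Ω}

theorem measurable_exceedanceWeight (hX : ∀ n, Measurable (X n)) :
    Measurable (exceedanceWeight X g q) :=
  Measurable.tsum fun n => measurable_const.indicator (measurableSet_lt measurable_const (hX n).abs)

theorem lintegral_exceedanceWeight (hX : ∀ n, Measurable (X n)) :
    ∫⁻ ω, exceedanceWeight X g q ω ∂μ = ∑' n : ℕ, (n : ℝ≥0∞) ^ q * μ {ω | g n < |X n ω|} := by
  have hA (n : ℕ) : MeasurableSet {ω | g n < |X n ω|} :=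
    measurableSet_lt measurable_const (hX n).abs
  simp only [exceedanceWeight]
  rw [lintegral_tsum fun n => (measurable_const.indicator (hA n)).aemeasurable]
  simp only [lintegral_indicator_const (hA _)]

theorem lintegral_Tbound_rpow_le (hX : ∀ n, Measurable (X n)) (hq : 0 < q) :
    ∫⁻ ω, Tbound X g ω ^ q ∂μ ≤ μ Set.univ + ∑' n : ℕ, (n : ℝ≥0∞) ^ q * μ {ω | g n < |X n ω|} :=
  calc ∫⁻ ω, Tbound X g ω ^ q ∂μ ≤ ∫⁻ ω, 1 + exceedanceWeight X g q ω ∂μ :=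
        lintegral_mono (Tbound_rpow_le_one_add_exceedanceWeight hq)
    _ = _ := by
      rw [lintegral_add_left measurable_const, lintegral_one, lintegral_exceedanceWeight hX]

theorem ae_Tbound_lt_top [IsFiniteMeasure μ] (hX : ∀ n, Measurable (X n)) (hq : 0 < q)
    (hsum : ∑' n : ℕ, (n : ℝ≥0∞) ^ q * μ {ω | g n < |X n ω|} ≠ ⊤) :
    ∀ᵐ ω ∂μ, Tbound X g ω < ⊤ := by
  have hint : ∫⁻ ω, exceedanceWeight X g q ω ∂μ ≠ ⊤ := by
    rwa [lintegral_exceedanceWeight hX]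
  filter_upwards [ae_lt_top (measurable_exceedanceWeight hX) hint] with ω hω
  have hrpow := (Tbound_rpow_le_one_add_exceedanceWeight hq ω).trans_lt
    (ENNReal.add_lt_top.mpr ⟨ENNReal.one_lt_top, hω⟩)
  exact (ENNReal.rpow_lt_top_iff_of_pos hq).mp hrpow

end Tbound

theorem ENNReal.tsum_natCast_rpow_mul_ne_top {a : ℕ → ℝ≥0∞} {q s K : ℝ} (hq : 0 < q)
    (ha : ∀ n : ℕ, 1 ≤ n → a n ≤ ENNReal.ofReal (K * (n : ℝ) ^ s)) (hqs : q + s < -1) :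
    ∑' n : ℕ, (n : ℝ≥0∞) ^ q * a n ≠ ⊤ := by
  have hterm (n : ℕ) : (n : ℝ≥0∞) ^ q * a n ≤ ENNReal.ofReal (K * (n : ℝ) ^ (q + s)) := by
    rcases Nat.eq_zero_or_pos n with rfl | hn
    · simp [ENNReal.zero_rpow_of_pos hq]
    have hn' : (0 : ℝ) < n := Nat.cast_pos.mpr hn
    calc (n : ℝ≥0∞) ^ q * a n
        ≤ ENNReal.ofReal ((n : ℝ) ^ q) * ENNReal.ofReal (K * (n : ℝ) ^ s) := by
          rw [← ENNReal.ofReal_rpow_of_nonneg hn'.le hq.le, ENNReal.ofReal_natCast]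
          gcongr
          exact ha n hn
      _ = ENNReal.ofReal (K * (n : ℝ) ^ (q + s)) := by
          rw [← ENNReal.ofReal_mul (Real.rpow_nonneg hn'.le q), Real.rpow_add hn']
          ring_nf
  refine ne_top_of_le_ne_top ?_ (ENNReal.tsum_le_tsum hterm)
  exact ENNReal.tsum_coe_ne_top_iff_summable.mpr
    ((Real.summable_nat_rpow.mpr hqs).mul_left K).toNNReal

theorem bounding_lemma_general {Ω : Type*} [MeasurableSpace Ω] (μ : Measure Ω)
    [IsProbabilityMeasure μ] (X : ℕ → Ω → ℝ) (hXmeas : ∀ n, Measurable (X n))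
    (ε δ p C r : ℝ)
    (hbound : ∀ n : ℕ, 1 ≤ n →
      μ {ω | ε * (n : ℝ) ^ δ ≤ |X n ω|} ≤
        ENNReal.ofReal (C * (n : ℝ) ^ (r - p * δ) * ε ^ (-p))) :
    (1 + r < p * δ →
      ∀ᵐ ω ∂μ, Tbound X (fun n => ε * (n : ℝ) ^ δ) ω < ⊤) ∧
    (∀ q : ℝ, 0 < q → q < p * δ - (1 + r) →
      ∫⁻ ω, Tbound X (fun n => ε * (n : ℝ) ^ δ) ω ^ q ∂μ < ⊤) := by
  have hsum (q : ℝ) (hq : 0 < q) (hqlt : q < p * δ - (1 + r)) :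
      ∑' n : ℕ, (n : ℝ≥0∞) ^ q * μ {ω | ε * (n : ℝ) ^ δ < |X n ω|} ≠ ⊤ := by
    refine ENNReal.tsum_natCast_rpow_mul_ne_top (K := C * ε ^ (-p)) (s := r - p * δ) hq
      (fun n hn => ?_) (by linarith)
    rw [mul_right_comm]
    exact (measure_mono (Set.ofPred_subset_ofPred.mpr fun ω => le_of_lt)).trans (hbound n hn)
  refine ⟨fun hpδ => ?_, fun q hq hqlt => ?_⟩
  · have hq : 0 < (p * δ - (1 + r)) / 2 := by linarith
    exact ae_Tbound_lt_top hXmeas hq (hsum _ hq (by linarith))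
  · exact (lintegral_Tbound_rpow_le hXmeas hq).trans_lt
      (ENNReal.add_lt_top.mpr ⟨measure_lt_top μ _, (hsum q hq hqlt).lt_top⟩)

/-- Bounding Lemma: if `P(|X_n| ≥ ε n^δ) ≤ C n^{r - pδ} ε^{-p}` for every `n ≥ 1`,
then (i) if `pδ > 1 + r` the random time `T_bound((X_n), ε n^δ)` is almost surely
finite, and (ii) its `q`-th moment is finite for every `q ∈ (0, pδ - (1 + r))`. -/
theorem bounding_lemma {Ω : Type*} [MeasurableSpace Ω] (μ : Measure Ω)
    [IsProbabilityMeasure μ] (X : ℕ → Ω → ℝ) (hXmeas : ∀ n, Measurable (X n))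
    (ε δ p C r : ℝ) (hε : 0 < ε) (hδ : 0 < δ) (hp : 0 < p) (hC : 0 < C) (hr : 0 ≤ r)
    (hbound : ∀ n : ℕ, 1 ≤ n →
      μ {ω | ε * (n : ℝ) ^ δ ≤ |X n ω|} ≤
        ENNReal.ofReal (C * (n : ℝ) ^ (r - p * δ) * ε ^ (-p))) :
    (1 + r < p * δ →
      ∀ᵐ ω ∂μ, Tbound X (fun n => ε * (n : ℝ) ^ δ) ω < ⊤) ∧
    (∀ q : ℝ, 0 < q → q < p * δ - (1 + r) →
      ∫⁻ ω, Tbound X (fun n => ε * (n : ℝ) ^ δ) ω ^ q ∂μ < ⊤) :=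
  bounding_lemma_general μ X hXmeas ε δ p C r hbound
end

section
/- Monotonicity (Hypothesis (i)) for the Burgers operator: let γ > 0 be a constant such that max_{x∈[0,1]} |h(x)| ≤ γ (∫_{0}^{1} h′(x)² dx)^{1/2} for every continuously differentiable h : [0,1] → ℝ with h(0) = h(1) = 0. Then for all twice continuously differentiable u, w : [0,1] → ℝ with u(0) = u(1) = w(0) = w(1) = 0, ∫_{0}^{1} [ (u − w)″(x) + u(x)u′(x) − w(x)w′(x) ] ( u(x) − w(x) ) dx ≤ −(1/2) ∫_{0}^{1} ( (u − w)′(x) )² dx + (γ²/8) ( ∫_{0}^{1} (u(x) − w(x))² dx ) ( ∫_{0}^{1} u′(x)² dx ). -/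
/-!
Write `e = u - w`. Integration by parts turns the diffusion term into `-∫ e'²`, and the
convection term `(u u' - w w') e` differs from `u' e² / 2` by the derivative of
`u³/6 + w³/3 - u w²/2`, so it integrates to `(1/2) ∫ u' e²`. Bounding `|e|` by
`γ (∫ e'²)^{1/2}` and `∫ |u'| |e|` by Cauchy–Schwarz leaves `(γ/2) ‖e‖_V ‖u‖_V ‖e‖_H`,
which AM–GM splits into `(1/2) ‖e‖_V² + (γ²/8) ‖e‖_H² ‖u‖_V²`.
-/

open Set MeasureTheory

namespace intervalIntegral

theorem integral_deriv_deriv_mul_eq_neg_integral_deriv_sq {a b : ℝ} {e e' e'' : ℝ → ℝ}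
    (he : ∀ x ∈ uIcc a b, HasDerivAt e (e' x) x)
    (he' : ∀ x ∈ uIcc a b, HasDerivAt e' (e'' x) x)
    (he'' : IntervalIntegrable e'' volume a b) (ha : e a = 0) (hb : e b = 0) :
    ∫ x in a..b, e'' x * e x = -∫ x in a..b, e' x ^ 2 := by
  have := integral_mul_deriv_eq_deriv_mul he he'
    (HasDerivAt.continuousOn he').intervalIntegrable he''
  simp only [ha, hb, zero_mul, sub_zero, zero_sub] at this
  simpa only [mul_comm (e'' _), sq] using this

theorem integral_mul_deriv_sub_mul_deriv_mul_sub {a b : ℝ} {u w u' w' : ℝ → ℝ}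
    (hu : ∀ x ∈ uIcc a b, HasDerivAt u (u' x) x) (hw : ∀ x ∈ uIcc a b, HasDerivAt w (w' x) x)
    (hu' : ContinuousOn u' (uIcc a b)) (hw' : ContinuousOn w' (uIcc a b))
    (hua : u a = 0) (hub : u b = 0) (hwa : w a = 0) (hwb : w b = 0) :
    ∫ x in a..b, (u x * u' x - w x * w' x) * (u x - w x) =
      1 / 2 * ∫ x in a..b, u' x * (u x - w x) ^ 2 := by
  have hu_cont := HasDerivAt.continuousOn hu
  have hw_cont := HasDerivAt.continuousOn hw
  have hconvection_cont :
      ContinuousOn (fun x => (u x * u' x - w x * w' x) * (u x - w x)) (uIcc a b) :=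
    ((hu_cont.mul hu').sub (hw_cont.mul hw')).mul (hu_cont.sub hw_cont)
  have hquadratic_cont : ContinuousOn (fun x => 1 / 2 * (u' x * (u x - w x) ^ 2)) (uIcc a b) :=
    continuousOn_const.mul (hu'.mul ((hu_cont.sub hw_cont).pow 2))
  have hG : ∀ x ∈ uIcc a b, HasDerivAt (fun x => u x ^ 3 / 6 + w x ^ 3 / 3 - u x * w x ^ 2 / 2)
      ((u x * u' x - w x * w' x) * (u x - w x) - 1 / 2 * (u' x * (u x - w x) ^ 2)) x := by
    intro x hx
    refine (((((hu x hx).pow 3).div_const 6).add (((hw x hx).pow 3).div_const 3)).sub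
      (((hu x hx).mul ((hw x hx).pow 2)).div_const 2)).congr_deriv ?_
    simp only [Pi.pow_apply]
    ring
  have hFTC :=
    integral_eq_sub_of_hasDerivAt hG (hconvection_cont.sub hquadratic_cont).intervalIntegrable
  rw [integral_sub hconvection_cont.intervalIntegrable hquadratic_cont.intervalIntegrable,
    integral_const_mul] at hFTC
  simp only [hua, hub, hwa, hwb] at hFTC
  linarith

theorem integral_abs_mul_abs_le {a b : ℝ} (hab : a ≤ b) {f g : ℝ → ℝ}
    (hf : ContinuousOn f (Icc a b)) (hg : ContinuousOn g (Icc a b)) :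
    ∫ x in a..b, |f x| * |g x| ≤ √(∫ x in a..b, f x ^ 2) * √(∫ x in a..b, g x ^ 2) := by
  have memLp_two {h : ℝ → ℝ} (hh : ContinuousOn h (Icc a b)) :
      MemLp (fun x => |h x|) (ENNReal.ofReal 2) (volume.restrict (Ioc a b)) := by
    rw [ENNReal.ofReal_ofNat, memLp_two_iff_integrable_sq]
    · simp only [sq_abs]
      exact (ContinuousOn.integrableOn_Icc (f := fun x => h x ^ 2) (hh.pow 2)).mono_set
        Ioc_subset_Icc_self
    · exact (hh.abs.integrableOn_Icc.mono_set Ioc_subset_Icc_self).aestronglyMeasurable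
  have := integral_mul_le_Lp_mul_Lq_of_nonneg Real.HolderConjugate.two_two
    (.of_forall fun x => abs_nonneg (f x)) (.of_forall fun x => abs_nonneg (g x))
    (memLp_two hf) (memLp_two hg)
  simpa only [integral_of_le hab, Real.sqrt_eq_rpow, Real.rpow_two, sq_abs] using this

theorem integral_mul_sq_le_of_abs_le {a b M : ℝ} (hab : a ≤ b) {g e : ℝ → ℝ}
    (hg : ContinuousOn g (Icc a b)) (he : ContinuousOn e (Icc a b))
    (hM : ∀ x ∈ Icc a b, |e x| ≤ M) :
    ∫ x in a..b, g x * e x ^ 2 ≤ M * √(∫ x in a..b, g x ^ 2) * √(∫ x in a..b, e x ^ 2) := by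
  have hM₀ : 0 ≤ M := (abs_nonneg _).trans (hM a (left_mem_Icc.2 hab))
  have hpointwise : ∀ x ∈ Icc a b, g x * e x ^ 2 ≤ M * (|g x| * |e x|) := fun x hx =>
    calc g x * e x ^ 2 ≤ |g x| * |e x| * |e x| := by
          rw [mul_assoc, ← sq, sq_abs]
          exact mul_le_mul_of_nonneg_right (le_abs_self _) (sq_nonneg _)
      _ ≤ |g x| * |e x| * M := by gcongr; exact hM x hx
      _ = M * (|g x| * |e x|) := mul_comm _ _
  calc ∫ x in a..b, g x * e x ^ 2 ≤ ∫ x in a..b, M * (|g x| * |e x|) :=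
        integral_mono_on hab ((hg.mul (he.pow 2)).intervalIntegrable_of_Icc hab)
          ((continuousOn_const.mul (hg.abs.mul he.abs)).intervalIntegrable_of_Icc hab) hpointwise
    _ = M * ∫ x in a..b, |g x| * |e x| := integral_const_mul _ _
    _ ≤ M * (√(∫ x in a..b, g x ^ 2) * √(∫ x in a..b, e x ^ 2)) :=
        mul_le_mul_of_nonneg_left (integral_abs_mul_abs_le hab hg he) hM₀
    _ = _ := (mul_assoc _ _ _).symm

end intervalIntegral

open intervalIntegral

theorem integral_burgers_drift_mul_sub {a b : ℝ} {u w u' w' u'' w'' : ℝ → ℝ}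
    (hu : ∀ x ∈ uIcc a b, HasDerivAt u (u' x) x) (hw : ∀ x ∈ uIcc a b, HasDerivAt w (w' x) x)
    (hu' : ∀ x ∈ uIcc a b, HasDerivAt u' (u'' x) x)
    (hw' : ∀ x ∈ uIcc a b, HasDerivAt w' (w'' x) x)
    (hu'' : ContinuousOn u'' (uIcc a b)) (hw'' : ContinuousOn w'' (uIcc a b))
    (hua : u a = 0) (hub : u b = 0) (hwa : w a = 0) (hwb : w b = 0) :
    ∫ x in a..b, ((u'' x - w'' x) + (u x * u' x - w x * w' x)) * (u x - w x) =
      -(∫ x in a..b, (u' x - w' x) ^ 2) + 1 / 2 * ∫ x in a..b, u' x * (u x - w x) ^ 2 := by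
  have hu_cont := HasDerivAt.continuousOn hu
  have hw_cont := HasDerivAt.continuousOn hw
  have hu'_cont := HasDerivAt.continuousOn hu'
  have hw'_cont := HasDerivAt.continuousOn hw'
  simp_rw [add_mul]
  rw [integral_add (f := fun x => (u'' x - w'' x) * (u x - w x))
    (g := fun x => (u x * u' x - w x * w' x) * (u x - w x))
    ((hu''.sub hw'').mul (hu_cont.sub hw_cont)).intervalIntegrable
    (((hu_cont.mul hu'_cont).sub (hw_cont.mul hw'_cont)).mul
      (hu_cont.sub hw_cont)).intervalIntegrable,
    integral_deriv_deriv_mul_eq_neg_integral_deriv_sq (e := fun x => u x - w x)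
      (fun x hx => (hu x hx).sub (hw x hx)) (fun x hx => (hu' x hx).sub (hw' x hx))
      (hu''.sub hw'').intervalIntegrable (by simp [hua, hwa]) (by simp [hub, hwb]),
    integral_mul_deriv_sub_mul_deriv_mul_sub hu hw hu'_cont hw'_cont hua hub hwa hwb]

theorem burgers_monotonicity_general
    (γ : ℝ)
    (hγ : ∀ h h' : ℝ → ℝ, (∀ x ∈ Icc (0 : ℝ) 1, HasDerivAt h (h' x) x) →
      ContinuousOn h' (Icc 0 1) → h 0 = 0 → h 1 = 0 →
      ∀ x ∈ Icc (0 : ℝ) 1, |h x| ≤ γ * Real.sqrt (∫ y in (0 : ℝ)..1, h' y ^ 2))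
    (u w u' w' u'' w'' : ℝ → ℝ)
    (hu : ∀ x ∈ Icc (0 : ℝ) 1, HasDerivAt u (u' x) x)
    (hw : ∀ x ∈ Icc (0 : ℝ) 1, HasDerivAt w (w' x) x)
    (hu' : ∀ x ∈ Icc (0 : ℝ) 1, HasDerivAt u' (u'' x) x)
    (hw' : ∀ x ∈ Icc (0 : ℝ) 1, HasDerivAt w' (w'' x) x)
    (hu'' : ContinuousOn u'' (Icc 0 1))
    (hw'' : ContinuousOn w'' (Icc 0 1))
    (hu0 : u 0 = 0) (hu1 : u 1 = 0) (hw0 : w 0 = 0) (hw1 : w 1 = 0) :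
    ∫ x in (0 : ℝ)..1,
        ((u'' x - w'' x) + (u x * u' x - w x * w' x)) * (u x - w x) ≤
      -(1 / 2) * (∫ x in (0 : ℝ)..1, (u' x - w' x) ^ 2) +
        γ ^ 2 / 8 * (∫ x in (0 : ℝ)..1, (u x - w x) ^ 2) *
          ∫ x in (0 : ℝ)..1, u' x ^ 2 := by
  have hu_cont := HasDerivAt.continuousOn hu
  have hw_cont := HasDerivAt.continuousOn hw
  have hu'_cont := HasDerivAt.continuousOn hu'
  have hw'_cont := HasDerivAt.continuousOn hw'
  rw [← uIcc_of_le zero_le_one] at hu hw hu' hw' hu'' hw''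
  rw [integral_burgers_drift_mul_sub hu hw hu' hw' hu'' hw'' hu0 hu1 hw0 hw1]
  set V := ∫ x in (0 : ℝ)..1, (u' x - w' x) ^ 2
  set H := ∫ x in (0 : ℝ)..1, (u x - w x) ^ 2
  set U := ∫ x in (0 : ℝ)..1, u' x ^ 2
  have hsup : ∀ x ∈ Icc (0 : ℝ) 1, |u x - w x| ≤ γ * √V :=
    hγ _ _ (fun x hx => (hu x (Icc_subset_uIcc hx)).sub (hw x (Icc_subset_uIcc hx)))
      (hu'_cont.sub hw'_cont) (by simp [hu0, hw0]) (by simp [hu1, hw1])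
  have hconvection_le : ∫ x in (0 : ℝ)..1, u' x * (u x - w x) ^ 2 ≤ γ * √V * √U * √H :=
    integral_mul_sq_le_of_abs_le zero_le_one hu'_cont (hu_cont.sub hw_cont) hsup
  have hV : √V ^ 2 = V := Real.sq_sqrt (integral_nonneg zero_le_one fun _ _ => sq_nonneg _)
  have hH : √H ^ 2 = H := Real.sq_sqrt (integral_nonneg zero_le_one fun _ _ => sq_nonneg _)
  have hU : √U ^ 2 = U := Real.sq_sqrt (integral_nonneg zero_le_one fun _ _ => sq_nonneg _)
  have hamgm : γ * √V * √U * √H ≤ V + γ ^ 2 * U * H / 4 := by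
    have := two_mul_le_add_sq (√V) (γ * √U * √H / 2)
    rw [div_pow, mul_pow, mul_pow, hV, hU, hH] at this
    linarith
  linarith

/-- Monotonicity (Hypothesis (i)) for the Burgers operator: if `γ` is a Sobolev
embedding constant (`max |h| ≤ γ (∫₀¹ h'²)^{1/2}` for all C¹ functions vanishing
at the endpoints), then for all C² functions `u, w` vanishing at the endpoints,
`∫₀¹ ((u-w)'' + u u' - w w')(u - w) dx
  ≤ -(1/2) ∫₀¹ ((u-w)')² dx + (γ²/8)(∫₀¹ (u-w)² dx)(∫₀¹ u'² dx)`. -/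
theorem burgers_monotonicity
    (γ : ℝ) (hγpos : 0 < γ)
    (hγ : ∀ h h' : ℝ → ℝ, (∀ x ∈ Icc (0 : ℝ) 1, HasDerivAt h (h' x) x) →
      ContinuousOn h' (Icc 0 1) → h 0 = 0 → h 1 = 0 →
      ∀ x ∈ Icc (0 : ℝ) 1, |h x| ≤ γ * Real.sqrt (∫ y in (0 : ℝ)..1, h' y ^ 2))
    (u w u' w' u'' w'' : ℝ → ℝ)
    (hu : ∀ x ∈ Icc (0 : ℝ) 1, HasDerivAt u (u' x) x)
    (hw : ∀ x ∈ Icc (0 : ℝ) 1, HasDerivAt w (w' x) x)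
    (hu' : ∀ x ∈ Icc (0 : ℝ) 1, HasDerivAt u' (u'' x) x)
    (hw' : ∀ x ∈ Icc (0 : ℝ) 1, HasDerivAt w' (w'' x) x)
    (hu'' : ContinuousOn u'' (Icc 0 1))
    (hw'' : ContinuousOn w'' (Icc 0 1))
    (hu0 : u 0 = 0) (hu1 : u 1 = 0) (hw0 : w 0 = 0) (hw1 : w 1 = 0) :
    ∫ x in (0 : ℝ)..1,
        ((u'' x - w'' x) + (u x * u' x - w x * w' x)) * (u x - w x) ≤
      -(1 / 2) * (∫ x in (0 : ℝ)..1, (u' x - w' x) ^ 2) +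
        γ ^ 2 / 8 * (∫ x in (0 : ℝ)..1, (u x - w x) ^ 2) *
          ∫ x in (0 : ℝ)..1, u' x ^ 2 :=
  burgers_monotonicity_general γ hγ u w u' w' u'' w'' hu hw hu' hw' hu'' hw'' hu0 hu1 hw0 hw1
end

section
/- Quasi-potential of the two-dimensional linear system with rotation: let λ > 0, β ∈ ℝ and let A be the 2×2 real matrix with rows (−λ, −β) and (β, −λ). For every x ∈ ℝ², the infimum inf{ (1/2) ∫_{−∞}^{0} ‖Ẏ(t) − A Y(t)‖² dt : Y : (−∞, 0] → ℝ² locally absolutely continuous, Ẏ − AY ∈ L²((−∞,0]; ℝ²), Y(0) = x, and ‖Y(t)‖ → 0 as t → −∞ } equals λ‖x‖², where ‖·‖ is the Euclidean norm on ℝ²; moreover the infimum is attained (by Y(t) = e^{(λI + βJ)t} x, where J is the rotation matrix with rows (0, −1) and (1, 0)). -/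
/-!
Write `A = -λI + βJ`. Since `J` is skew, `⟪A y, y⟫ = -λ‖y‖²`, and completing the square gives
`‖v - A y‖² = ‖v - (λI + βJ) y‖² + 4λ⟪v, y⟫ ≥ 4λ⟪v, y⟫`. Along an admissible path `⟪Ẏ, Y⟫`
integrates over `[a, 0]` to `(‖Y 0‖² - ‖Y a‖²) / 2` (the fundamental theorem of calculus for
absolutely continuous functions, applied coordinatewise), so the action is at least
`λ(‖x‖² - ‖Y a‖²)` for every `a ≤ 0`, hence at least `λ‖x‖²`. Equality holds exactly along
`Ẏ = (λI + βJ) Y`, whose solution `Y t = e^{(λI + βJ)t} x` decays at `-∞` because `λ > 0`.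
-/

open MeasureTheory Filter Set
open scoped InnerProductSpace

theorem integral_mul_eq_sq_sub_sq_of_eq_add_integral {f f' : ℝ → ℝ} {a b : ℝ}
    (hf' : IntervalIntegrable f' volume a b)
    (hf : ∀ t ∈ uIcc a b, f t = f a + ∫ s in a..t, f' s) :
    ∫ t in a..b, f' t * f t = (f b ^ 2 - f a ^ 2) / 2 := by
  set G : ℝ → ℝ := fun t => ∫ s in a..t, f' s with hG_def
  have hG : AbsolutelyContinuousOnInterval G a b :=
    hf'.absolutelyContinuousOnInterval_intervalIntegral left_mem_uIcc
  have hderiv : ∀ᵐ t, t ∈ uIoc a b → deriv G t = f' t := by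
    filter_upwards [hf'.ae_hasDerivAt_integral] with t ht ht'
    exact (ht (uIoc_subset_uIcc ht') a left_mem_uIcc).deriv
  have hGG : ∫ t in a..b, f' t * G t = G b ^ 2 / 2 := by
    have h := hG.integral_deriv_mul_eq_sub hG
    rw [intervalIntegral.integral_congr_ae (g := fun t => 2 * (f' t * G t))
      (hderiv.mono fun t h ht => by rw [h ht]; ring), intervalIntegral.integral_const_mul] at h
    simp only [hG_def, intervalIntegral.integral_same] at h ⊢
    linarith
  have hfb : f b = f a + G b := hf b right_mem_uIcc
  calc ∫ t in a..b, f' t * f t = ∫ t in a..b, (f' t * f a + f' t * G t) :=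
        intervalIntegral.integral_congr fun t ht => by rw [hf t ht, mul_add]
    _ = G b * f a + G b ^ 2 / 2 := by
        rw [intervalIntegral.integral_add (hf'.mul_const _) (hf'.mul_continuousOn hG.continuousOn),
          intervalIntegral.integral_mul_const, hGG]
    _ = (f b ^ 2 - f a ^ 2) / 2 := by rw [hfb]; ring

theorem continuousOn_of_eq_add_integral {E : Type*} [NormedAddCommGroup E] [NormedSpace ℝ E]
    [CompleteSpace E] {f f' : ℝ → E} {a b : ℝ} (hf' : IntervalIntegrable f' volume a b)
    (hf : ∀ t ∈ uIcc a b, f t = f a + ∫ s in a..t, f' s) :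
    ContinuousOn f (uIcc a b) :=
  (continuousOn_const.add
    (intervalIntegral.continuousOn_primitive_interval' hf' left_mem_uIcc)).congr hf

theorem four_mul_inner_le_norm_sub_sq {E : Type*} [NormedAddCommGroup E] [InnerProductSpace ℝ E]
    {l : ℝ} {v y z : E} (hz : ⟪z, y⟫_ℝ = -l * ‖y‖ ^ 2) :
    4 * l * ⟪v, y⟫_ℝ ≤ ‖v - z‖ ^ 2 := by
  -- completing the square: `‖v - z - 2l • y‖² = ‖v - z‖² - 4l⟪v, y⟫`
  have h := norm_sub_sq_real (v - z) ((2 * l) • y)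
  rw [inner_smul_right, inner_sub_left, hz, norm_smul, mul_pow, Real.norm_eq_abs, sq_abs] at h
  nlinarith [sq_nonneg ‖v - z - (2 * l) • y‖]

section EuclideanSpace

variable {ι : Type*} [Fintype ι] {Y Y' : ℝ → EuclideanSpace ℝ ι} {a b : ℝ}

theorem real_inner_eq_sum_mul (v y : EuclideanSpace ℝ ι) : ⟪v, y⟫_ℝ = ∑ i, v i * y i := by
  simp [PiLp.inner_apply, mul_comm]

theorem IntervalIntegrable.ofLp_apply (hY' : IntervalIntegrable Y' volume a b) (i : ι) :
    IntervalIntegrable (fun t => Y' t i) volume a b :=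
  intervalIntegrable_iff.2
    ((EuclideanSpace.proj (𝕜 := ℝ) i).integrable_comp (intervalIntegrable_iff.1 hY'))

section Primitive

variable (hY' : IntervalIntegrable Y' volume a b)
  (hY : ∀ t ∈ uIcc a b, Y t = Y a + ∫ s in a..t, Y' s)
include hY' hY

theorem apply_eq_add_integral_apply (i : ι) :
    ∀ t ∈ uIcc a b, Y t i = Y a i + ∫ s in a..t, Y' s i := fun t ht => by
  rw [hY t ht, PiLp.add_apply]
  exact congrArg _ ((EuclideanSpace.proj (𝕜 := ℝ) i).intervalIntegral_comp_comm
    (hY'.mono_set (uIcc_subset_uIcc left_mem_uIcc ht))).symm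

theorem intervalIntegrable_apply_mul_apply_of_eq_add_integral (i : ι) :
    IntervalIntegrable (fun t => Y' t i * Y t i) volume a b :=
  (hY'.ofLp_apply i).mul_continuousOn
    (continuousOn_of_eq_add_integral (hY'.ofLp_apply i) (apply_eq_add_integral_apply hY' hY i))

theorem intervalIntegrable_inner_of_eq_add_integral :
    IntervalIntegrable (fun t => ⟪Y' t, Y t⟫_ℝ) volume a b := by
  simpa only [real_inner_eq_sum_mul, Finset.sum_fn] using IntervalIntegrable.sum Finset.univ
    fun i _ => intervalIntegrable_apply_mul_apply_of_eq_add_integral hY' hY i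

theorem integral_inner_eq_norm_sq_sub_norm_sq :
    ∫ t in a..b, ⟪Y' t, Y t⟫_ℝ = (‖Y b‖ ^ 2 - ‖Y a‖ ^ 2) / 2 := by
  simp_rw [real_inner_eq_sum_mul, EuclideanSpace.real_norm_sq_eq, ← Finset.sum_sub_distrib,
    Finset.sum_div]
  rw [intervalIntegral.integral_finsetSum
    fun i _ => intervalIntegrable_apply_mul_apply_of_eq_add_integral hY' hY i]
  exact Finset.sum_congr rfl fun i _ => integral_mul_eq_sq_sub_sq_of_eq_add_integral
    (hY'.ofLp_apply i) (apply_eq_add_integral_apply hY' hY i)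

end Primitive

variable {l : ℝ} {A : EuclideanSpace ℝ ι → EuclideanSpace ℝ ι}

theorem two_mul_sub_le_integral_norm_sub_sq (hA : ∀ y, ⟪A y, y⟫_ℝ = -l * ‖y‖ ^ 2) (hab : a ≤ b)
    (hY' : IntervalIntegrable Y' volume a b)
    (hY : ∀ t ∈ uIcc a b, Y t = Y a + ∫ s in a..t, Y' s)
    (hg : IntervalIntegrable (fun t => ‖Y' t - A (Y t)‖ ^ 2) volume a b) :
    2 * l * (‖Y b‖ ^ 2 - ‖Y a‖ ^ 2) ≤ ∫ t in a..b, ‖Y' t - A (Y t)‖ ^ 2 :=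
  calc 2 * l * (‖Y b‖ ^ 2 - ‖Y a‖ ^ 2) = ∫ t in a..b, 4 * l * ⟪Y' t, Y t⟫_ℝ := by
        rw [intervalIntegral.integral_const_mul, integral_inner_eq_norm_sq_sub_norm_sq hY' hY]
        ring
    _ ≤ ∫ t in a..b, ‖Y' t - A (Y t)‖ ^ 2 :=
        intervalIntegral.integral_mono_on hab
          ((intervalIntegrable_inner_of_eq_add_integral hY' hY).const_mul _) hg
          fun t _ => four_mul_inner_le_norm_sub_sq (hA (Y t))

theorem two_mul_norm_sq_le_integral_Iic_norm_sub_sq (hA : ∀ y, ⟪A y, y⟫_ℝ = -l * ‖y‖ ^ 2)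
    (hY' : ∀ a b : ℝ, a ≤ b → b ≤ 0 → IntervalIntegrable Y' volume a b)
    (hY : ∀ a b : ℝ, a ≤ b → b ≤ 0 → Y b = Y a + ∫ r in a..b, Y' r)
    (hg : IntegrableOn (fun t => ‖Y' t - A (Y t)‖ ^ 2) (Iic 0))
    (hlim : Tendsto (fun t => ‖Y t‖) atBot (nhds 0)) :
    2 * l * ‖Y 0‖ ^ 2 ≤ ∫ t in Iic (0 : ℝ), ‖Y' t - A (Y t)‖ ^ 2 := by
  have hbound : ∀ a ≤ (0 : ℝ),
      2 * l * (‖Y 0‖ ^ 2 - ‖Y a‖ ^ 2) ≤ ∫ t in a..0, ‖Y' t - A (Y t)‖ ^ 2 := fun a ha =>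
    two_mul_sub_le_integral_norm_sub_sq hA ha (hY' a 0 ha le_rfl)
      (fun t ht => hY a t (uIcc_of_le ha ▸ ht).1 (uIcc_of_le ha ▸ ht).2)
      ((intervalIntegrable_iff_integrableOn_Ioc_of_le ha).2 (hg.mono_set Ioc_subset_Iic_self))
  have hlhs : Tendsto (fun a => 2 * l * (‖Y 0‖ ^ 2 - ‖Y a‖ ^ 2)) atBot
      (nhds (2 * l * ‖Y 0‖ ^ 2)) := by
    simpa using ((hlim.pow 2).const_sub (‖Y 0‖ ^ 2)).const_mul (2 * l)
  exact le_of_tendsto_of_tendsto hlhs (intervalIntegral_tendsto_integral_Iic 0 hg tendsto_id)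
    ((eventually_le_atBot 0).mono hbound)

end EuclideanSpace

theorem inner_toEuclideanLin_self (a b : ℝ) (y : EuclideanSpace ℝ (Fin 2)) :
    ⟪Matrix.toEuclideanLin !![a, -b; b, a] y, y⟫_ℝ = a * ‖y‖ ^ 2 := by
  simp [EuclideanSpace.real_norm_sq_eq, PiLp.inner_apply, Matrix.toLpLin_apply, Fin.sum_univ_two,
    Matrix.vecHead, Matrix.vecTail]
  ring

section Rotation

open Complex

theorem toEuclideanLin_orthonormalBasisOneI_repr (a b : ℝ) (z : ℂ) :
    Matrix.toEuclideanLin !![a, -b; b, a] (orthonormalBasisOneI.repr z)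
      = orthonormalBasisOneI.repr ((a + b * I) * z) := by
  ext i
  fin_cases i <;> simp [Matrix.toLpLin_apply] <;> ring

/-- `e^{(λI + βJ)t} x`, computed in `ℂ ≃ ℝ²`, where `J` acts as multiplication by `I`. -/
noncomputable def rotationPath (l β : ℝ) (x : EuclideanSpace ℝ (Fin 2)) (t : ℝ) :
    EuclideanSpace ℝ (Fin 2) :=
  orthonormalBasisOneI.repr (exp ((l + β * I) * t) * orthonormalBasisOneI.repr.symm x)

variable (l β : ℝ) (x : EuclideanSpace ℝ (Fin 2))

theorem hasDerivAt_rotationPath (t : ℝ) :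
    HasDerivAt (rotationPath l β x)
      (Matrix.toEuclideanLin !![l, -β; β, l] (rotationPath l β x t)) t := by
  have h : HasDerivAt (fun t : ℝ => exp ((l + β * I) * t) * orthonormalBasisOneI.repr.symm x)
      ((l + β * I) * (exp ((l + β * I) * t) * orthonormalBasisOneI.repr.symm x)) t := by
    refine ((((hasDerivAt_id t).ofReal_comp.const_mul (l + β * I)).cexp).mul_const
      (orthonormalBasisOneI.repr.symm x)).congr_deriv ?_
    simp only [id, ofReal_one, mul_one]
    ring
  rw [rotationPath, toEuclideanLin_orthonormalBasisOneI_repr]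
  exact orthonormalBasisOneI.repr.toContinuousLinearEquiv.hasFDerivAt.comp_hasDerivAt t h

theorem continuous_rotationPath : Continuous (rotationPath l β x) :=
  continuous_iff_continuousAt.2 fun t => (hasDerivAt_rotationPath l β x t).continuousAt

theorem rotationPath_zero : rotationPath l β x 0 = x := by
  simp only [rotationPath, ofReal_zero, mul_zero, exp_zero, one_mul,
    LinearIsometryEquiv.apply_symm_apply]

theorem norm_rotationPath (t : ℝ) : ‖rotationPath l β x t‖ = Real.exp (l * t) * ‖x‖ := by
  simp only [rotationPath, LinearIsometryEquiv.norm_map, norm_mul, norm_exp,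
    mul_re, add_re, ofReal_re, ofReal_im, I_re, I_im]
  simp

theorem rotationPath_deriv_sub_drift (t : ℝ) :
    Matrix.toEuclideanLin !![l, -β; β, l] (rotationPath l β x t)
      - Matrix.toEuclideanLin !![-l, -β; β, -l] (rotationPath l β x t)
      = (2 * l) • rotationPath l β x t := by
  rw [rotationPath, toEuclideanLin_orthonormalBasisOneI_repr,
    toEuclideanLin_orthonormalBasisOneI_repr, ← map_sub, ← map_smul, real_smul]
  congr 1
  push_cast
  ring

theorem tendsto_norm_rotationPath_atBot (hl : 0 < l) :
    Tendsto (fun t => ‖rotationPath l β x t‖) atBot (nhds 0) := by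
  simp_rw [norm_rotationPath]
  simpa using (Real.tendsto_exp_atBot.comp (tendsto_id.const_mul_atBot hl)).mul_const ‖x‖

theorem norm_rotationPath_deriv_sub_drift_sq (t : ℝ) :
    ‖Matrix.toEuclideanLin !![l, -β; β, l] (rotationPath l β x t)
      - Matrix.toEuclideanLin !![-l, -β; β, -l] (rotationPath l β x t)‖ ^ 2
      = 4 * l ^ 2 * ‖x‖ ^ 2 * Real.exp (2 * l * t) := by
  rw [rotationPath_deriv_sub_drift, norm_smul, norm_rotationPath, Real.norm_eq_abs, mul_pow,
    sq_abs, mul_pow, mul_pow, ← Real.exp_nat_mul]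
  push_cast
  ring_nf

theorem integrableOn_norm_rotationPath_deriv_sub_drift_sq (hl : 0 < l) :
    IntegrableOn (fun t => ‖Matrix.toEuclideanLin !![l, -β; β, l] (rotationPath l β x t)
      - Matrix.toEuclideanLin !![-l, -β; β, -l] (rotationPath l β x t)‖ ^ 2) (Iic 0) := by
  simp_rw [norm_rotationPath_deriv_sub_drift_sq]
  exact (integrableOn_exp_mul_Iic (by positivity) 0).const_mul _

theorem integral_Iic_norm_rotationPath_deriv_sub_drift_sq (hl : 0 < l) :
    ∫ t in Iic (0 : ℝ), ‖Matrix.toEuclideanLin !![l, -β; β, l] (rotationPath l β x t)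
      - Matrix.toEuclideanLin !![-l, -β; β, -l] (rotationPath l β x t)‖ ^ 2
      = 2 * l * ‖x‖ ^ 2 := by
  simp_rw [norm_rotationPath_deriv_sub_drift_sq]
  rw [integral_const_mul, integral_exp_mul_Iic (by positivity), mul_zero, Real.exp_zero]
  field_simp
  ring

end Rotation

/-- Quasi-potential of the two-dimensional linear system with rotation: for the
matrix `A = [[-λ, -β], [β, -λ]]`, the Freidlin–Wentzell action
`(1/2)∫_{-∞}^0 ‖Ẏ - AY‖² dt` over locally absolutely continuous paths
`Y : (-∞,0] → ℝ²` with `Ẏ - AY ∈ L²`, `Y(0) = x` and `‖Y(t)‖ → 0` as `t → -∞`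
has least value `λ‖x‖²` (so the infimum equals `λ‖x‖²` and is attained). -/
theorem quasiPotential_linear_rotation (l β : ℝ) (hl : 0 < l)
    (x : EuclideanSpace ℝ (Fin 2)) :
    IsLeast
      {c : ℝ | ∃ Y Y' : ℝ → EuclideanSpace ℝ (Fin 2),
        (∀ a b : ℝ, a ≤ b → b ≤ 0 → IntervalIntegrable Y' volume a b) ∧
        (∀ a b : ℝ, a ≤ b → b ≤ 0 → Y b = Y a + ∫ r in a..b, Y' r) ∧
        IntegrableOn
          (fun t => ‖Y' t - Matrix.toEuclideanLin !![-l, -β; β, -l] (Y t)‖ ^ 2)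
          (Iic 0) ∧
        Y 0 = x ∧
        Tendsto (fun t => ‖Y t‖) atBot (nhds 0) ∧
        c = (1 / 2) * ∫ t in Iic (0 : ℝ),
          ‖Y' t - Matrix.toEuclideanLin !![-l, -β; β, -l] (Y t)‖ ^ 2}
      (l * ‖x‖ ^ 2) := by
  have hderiv_cont :
      Continuous fun t => Matrix.toEuclideanLin !![l, -β; β, l] (rotationPath l β x t) :=
    (LinearMap.continuous_of_finiteDimensional _).comp (continuous_rotationPath l β x)
  refine ⟨⟨rotationPath l β x,
    fun t => Matrix.toEuclideanLin !![l, -β; β, l] (rotationPath l β x t),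
    fun a b _ _ => hderiv_cont.intervalIntegrable a b, fun a b _ _ => ?_,
    integrableOn_norm_rotationPath_deriv_sub_drift_sq l β x hl, rotationPath_zero l β x,
    tendsto_norm_rotationPath_atBot l β x hl, ?_⟩, ?_⟩
  · rw [intervalIntegral.integral_eq_sub_of_hasDerivAt
      (fun t _ => hasDerivAt_rotationPath l β x t) (hderiv_cont.intervalIntegrable a b)]
    abel
  · rw [integral_Iic_norm_rotationPath_deriv_sub_drift_sq l β x hl]
    ring
  · rintro c ⟨Y, Y', hY', hY, hg, rfl, hlim, rfl⟩
    have := two_mul_norm_sq_le_integral_Iic_norm_sub_sq (inner_toEuclideanLin_self (-l) β)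
      hY' hY hg hlim
    linarith
end
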